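/- Let B be a finite-dimensional Lie algebra over a field K of characteristic zero and let w : B × B → B* be a 2-cocycle, so that B ⊕ B* with the product [b+β, b'+β'] = [b,b']_B + w(b,b') + ad*(b)(β') − ad*(b')(β) is a Lie algebra, where ad*(b)(β) = −β∘ad(b). Then the hyperbolic symmetric bilinear form q_B(b+β, b'+β') = β(b') + β'(b) is invariant for this Lie algebra, i.e. q_B([X,Y],Z) = q_B(X,[Y,Z]) for all X,Y,Z ∈ B ⊕ B*, if and only if w is cyclic, i.e. w(a,b)(c) = w(c,a)(b) = w(b,c)(a) for all a,b,c ∈ B. -/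
import Mathlib


open Module

variable {K B : Type*}

/-- The T*-extension bracket `[b+β, b'+β'] = [b,b'] + w(b,b') + ad*(b)(β') − ad*(b')(β)`
on `B ⊕ B*` for a Lie algebra `B`, where `ad*(b)(β) = −β ∘ ad(b)`. -/
def tLieBr [Field K] [LieRing B] [LieAlgebra K B]
    (w : B →ₗ[K] B →ₗ[K] Module.Dual K B)
    (X Y : B × Module.Dual K B) : B × Module.Dual K B :=
  (⁅X.1, Y.1⁆,
    w X.1 Y.1 + (-(Y.2 ∘ₗ (LieAlgebra.ad K B X.1))) - (-(X.2 ∘ₗ (LieAlgebra.ad K B Y.1))))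

/-- The hyperbolic form `q_B(b+β, b'+β') = β(b') + β'(b)`. -/
def hypForm [Field K] [AddCommGroup B] [Module K B]
    (X Y : B × Module.Dual K B) : K :=
  X.2 Y.1 + Y.2 X.1

/-- For a Lie algebra `B` and a 2-cocycle `w : B × B → B*`, the hyperbolic form `q_B`
is invariant for the Lie algebra `B ⊕ B*` if and only if `w` is cyclic. -/
theorem stmt7 [Field K] [CharZero K] [LieRing B] [LieAlgebra K B] [FiniteDimensional K B]
    (w : B →ₗ[K] B →ₗ[K] Module.Dual K B)
    (hskew : ∀ a b : B, w a b = - w b a)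
    (hcoc : ∀ a b c : B, w ⁅a, b⁆ c + w ⁅b, c⁆ a + w ⁅c, a⁆ b =
      -((w b c) ∘ₗ (LieAlgebra.ad K B a)) + -((w c a) ∘ₗ (LieAlgebra.ad K B b)) +
        -((w a b) ∘ₗ (LieAlgebra.ad K B c))) :
    (∀ X Y Z : B × Module.Dual K B,
        hypForm (tLieBr w X Y) Z = hypForm X (tLieBr w Y Z))
    ↔
    (∀ a b c : B, w a b c = w c a b ∧ w c a b = w b c a) := by
  constructor
  · intro h a b c
    have key : ∀ x y z : B, w x y z = w y z x := by
      intro x y z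
      have := h (x, (0 : Module.Dual K B)) (y, 0) (z, 0)
      simpa [hypForm, tLieBr] using this
    exact ⟨(key c a b).symm, (key c a b).trans (key a b c)⟩
  · intro h X Y Z
    have key : ∀ x y z : B, w x y z = w y z x := fun x y z => ((h x y z).2).symm ▸ (h x y z).1
    simp only [hypForm, tLieBr, LinearMap.sub_apply, LinearMap.add_apply,
      LinearMap.neg_apply, LinearMap.comp_apply, LieAlgebra.ad_apply]
    rw [key X.1 Y.1 Z.1]
    have h1 : Z.2 ⁅Y.1, X.1⁆ = - Z.2 ⁅X.1, Y.1⁆ := by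
      rw [← lie_skew X.1 Y.1, map_neg, neg_neg]
    have h2 : Y.2 ⁅Z.1, X.1⁆ = - Y.2 ⁅X.1, Z.1⁆ := by
      rw [← lie_skew X.1 Z.1, map_neg, neg_neg]
    rw [h1, h2]; ring
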